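/- Fix ε > 0. Let β: D → [0,1] be a function on a dyadic lattice D of an Ahlfors regular measure μ, and say E′ ∈ D dominates E ∈ D from above if E′ ⊇ E and β(E′)² > (ℓ(E′)/ℓ(E))^ε β(E)². Let D_up be the cubes not dominated from above by any cube. Then there is a constant c(ε) > 0, depending also on the Ahlfors-regularity data, such that Σ_{E ∈ D_up} β(E)² μ(E) ≥ c(ε) Σ_{E ∈ D} β(E)² μ(E). -/

import Mathlib

open scoped ENNReal

/-- An abstract dyadic lattice (Christ–David cubes) for an Ahlfors regular measure:
cubes carry a generation `J`, an inclusion relation `sub`, and a mass `m = μ(E)`.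
Cubes containing a given cube form a chain, each cube has an ancestor in every
higher generation, and the cubes of a fixed generation contained in a cube `E₀`
partition it (so their masses sum to at most `m E₀`). -/
structure AbsDyadicLattice (ι : Type) where
  J : ι → ℤ
  sub : ι → ι → Prop
  m : ι → ℝ≥0∞
  sub_refl : ∀ E, sub E E
  sub_trans : ∀ {a b c}, sub a b → sub b c → sub a c
  sub_antisymm : ∀ {a b}, sub a b → sub b a → a = b
  sub_gen : ∀ {a b}, sub a b → J a ≤ J b
  chain : ∀ {a b c}, sub a b → sub a c → sub b c ∨ sub c b
  exists_anc : ∀ E, ∀ j : ℤ, J E ≤ j → ∃ E', sub E E' ∧ J E' = j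
  m_pos : ∀ E, 0 < m E
  m_lt_top : ∀ E, m E < ⊤
  packing : ∀ (E₀ : ι) (j : ℤ), j ≤ J E₀ →
    ∑' E : {E : ι // sub E E₀ ∧ J E = j}, m E.1 ≤ m E₀

/-!
Domination only sees `β² ℓ^{-ε}`: `E'` dominates `E` exactly when `E ⊆ E'` and this quantity is
larger at `E'`. Since `β ≤ 1` it is at most `ℓ^{-ε}`, so among the ancestors of a cube `E` with
`β(E) ≠ 0` that carry at least its value there is one, `U`, of greatest generation. Then `U` is
undominated and `β(E)² ≤ 2^{-εk} β(U)²`, `k` being the generation gap. By packing, the cubes sent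
to `U` with gap `k` have total mass at most `μ(U)`, so summing the geometric series in `k` gives
the theorem with `c = 1 - 2^{-ε}`.
-/

open Function

lemma two_rpow_sub_mul_mul_lt_iff {a b ε x y : ℝ} :
    (2 : ℝ) ^ ((a - b) * ε) * x < y ↔ x * 2 ^ (-(b * ε)) < y * 2 ^ (-(a * ε)) := by
  rw [show (a - b) * ε = a * ε + -(b * ε) by ring, Real.rpow_add two_pos, mul_assoc,
    ← lt_div_iff₀' (by positivity), Real.rpow_neg zero_le_two (a * ε), div_eq_mul_inv, mul_comm x]

lemma le_pow_mul_of_mul_two_rpow_le {a ε x y : ℝ} {k : ℕ}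
    (h : x * 2 ^ (-(a * ε)) ≤ y * 2 ^ (-((a + k) * ε))) : x ≤ ((2 : ℝ) ^ (-ε)) ^ k * y := by
  rw [show -((a + k) * ε) = -(a * ε) + -ε * k by ring, Real.rpow_add two_pos,
    Real.rpow_mul zero_le_two, Real.rpow_natCast, mul_comm (_ ^ _), ← mul_assoc] at h
  rw [mul_comm (_ ^ k)]
  exact le_of_mul_le_mul_right h (by positivity)

lemma exists_int_bound_of_le_two_rpow {c ε : ℝ} (hc : 0 < c) (hε : 0 < ε) :
    ∃ b : ℤ, ∀ j : ℤ, c ≤ (2 : ℝ) ^ (-(j * ε)) → j ≤ b := by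
  refine ⟨⌈-Real.log c / (ε * Real.log 2)⌉, fun j hj => ?_⟩
  have hlog : Real.log c ≤ -(j * ε) * Real.log 2 := by
    simpa only [Real.log_rpow two_pos] using Real.log_le_log hc hj
  have hj' : (j : ℝ) ≤ -Real.log c / (ε * Real.log 2) := by
    rw [le_div_iff₀ (mul_pos hε (Real.log_pos one_lt_two))]
    linarith
  exact_mod_cast hj'.trans (Int.le_ceil _)

namespace AbsDyadicLattice

variable {ι : Type} (D : AbsDyadicLattice ι)

theorem tsum_m_comp_le {α : Type*} {f : α → ι} (hf : Injective f) {U : ι} {j : ℤ}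
    (hj : j ≤ D.J U) (hsub : ∀ a, D.sub (f a) U) (hJ : ∀ a, D.J (f a) = j) :
    ∑' a, D.m (f a) ≤ D.m U :=
  le_trans (ENNReal.tsum_comp_le_tsum_of_injective
      (f := fun a => (⟨f a, hsub a, hJ a⟩ : {E : ι // D.sub E U ∧ D.J E = j}))
      (fun _ _ h => hf (congrArg Subtype.val h)) (fun E => D.m E.1))
    (D.packing U j hj)

theorem eq_of_sub_of_J_eq {a b : ι} (hab : D.sub a b) (hJ : D.J a = D.J b) : a = b := by
  by_contra hne
  have hinj : Injective fun i : Bool => if i then a else b := by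
    intro i i'; cases i <;> cases i' <;> simp [hne, Ne.symm hne]
  have hpair := D.tsum_m_comp_le (U := b) hinj le_rfl
    (fun i => by cases i <;> simp [hab, D.sub_refl]) (fun i => by cases i <;> simp [hJ])
  simp only [tsum_bool, Bool.false_eq_true, if_false, if_true] at hpair
  exact (D.m_pos a).not_ge
    ((ENNReal.add_le_add_iff_left (D.m_lt_top b).ne).mp (hpair.trans_eq (add_zero _).symm))

theorem exists_sub_forall_not_lt {α : Type*} [Preorder α] (f : ι → α) (E : ι)
    (hbdd : ∃ b, ∀ F, D.sub E F → f E ≤ f F → D.J F ≤ b) :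
    ∃ F, D.sub E F ∧ f E ≤ f F ∧ ∀ G, D.sub F G → ¬ f F < f G := by
  obtain ⟨b, hb⟩ := hbdd
  obtain ⟨_, ⟨F, ⟨hEF, hfF⟩, rfl⟩, hmax⟩ :=
    Int.exists_greatest_of_bdd (P := fun j => ∃ F, (D.sub E F ∧ f E ≤ f F) ∧ D.J F = j)
      ⟨b, by rintro _ ⟨F, ⟨hEF, hfF⟩, rfl⟩; exact hb F hEF hfF⟩
      ⟨_, E, ⟨D.sub_refl E, le_rfl⟩, rfl⟩
  refine ⟨F, hEF, hfF, fun G hFG hlt => ?_⟩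
  have hJ : D.J G = D.J F :=
    le_antisymm (hmax _ ⟨G, ⟨D.sub_trans hEF hFG, hfF.trans hlt.le⟩, rfl⟩) (D.sub_gen hFG)
  exact hlt.ne (congrArg f (D.eq_of_sub_of_J_eq hFG hJ.symm))

theorem tsum_mul_m_le_of_geometric_decay (T : ι → Prop) (w : ι → ℝ≥0∞) (r : ℝ≥0∞)
    (h : ∀ E, w E ≠ 0 → ∃ U, T U ∧ D.sub E U ∧ ∃ k : ℕ, D.J U = D.J E + k ∧ w E ≤ r ^ k * w U) :
    ∑' E, w E * D.m E ≤ (1 - r)⁻¹ * ∑' U : {U // T U}, w U.1 * D.m U.1 := by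
  choose U hT hsub k hJ hw using h
  let S := support w
  let G : S → {U // T U} × ℕ := fun E => (⟨U E.1 E.2, hT E.1 E.2⟩, k E.1 E.2)
  have hfiber : ∀ p, ∑' E : {E : S // G E = p}, w E.1.1 * D.m E.1.1 ≤
      r ^ p.2 * (w p.1.1 * D.m p.1.1) := by
    rintro ⟨⟨V, hV⟩, n⟩
    have hUV (E : {E : S // G E = (⟨V, hV⟩, n)}) : U E.1.1 E.1.2 = V ∧ k E.1.1 E.1.2 = n := by
      simpa [G, Prod.ext_iff] using E.2
    calc ∑' E : {E : S // G E = (⟨V, hV⟩, n)}, w E.1.1 * D.m E.1.1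
        ≤ ∑' E : {E : S // G E = (⟨V, hV⟩, n)}, r ^ n * w V * D.m E.1.1 :=
          ENNReal.tsum_le_tsum fun E => by
            gcongr
            simpa [(hUV E).1, (hUV E).2] using hw E.1.1 E.1.2
      _ = r ^ n * w V * ∑' E : {E : S // G E = (⟨V, hV⟩, n)}, D.m E.1.1 := ENNReal.tsum_mul_left
      _ ≤ r ^ n * w V * D.m V := by
          gcongr
          refine D.tsum_m_comp_le (j := D.J V - n) (fun E E' h => Subtype.ext (Subtype.ext h))
            (by omega) (fun E => by simpa only [(hUV E).1] using hsub E.1.1 E.1.2) (fun E => ?_)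
          have := hJ E.1.1 E.1.2
          rw [(hUV E).1, (hUV E).2] at this
          omega
      _ = r ^ n * (w V * D.m V) := mul_assoc _ _ _
  calc ∑' E, w E * D.m E = ∑' E : S, w E.1 * D.m E.1 :=
        (tsum_subtype_eq_of_support_subset (support_mul_subset_left _ _)).symm
    _ = ∑' p, ∑' E : {E : S // G E = p}, w E.1.1 * D.m E.1.1 := by
        rw [← (Equiv.sigmaFiberEquiv G).tsum_eq, ENNReal.tsum_sigma']
        rfl
    _ ≤ ∑' p : {U // T U} × ℕ, r ^ p.2 * (w p.1.1 * D.m p.1.1) := ENNReal.tsum_le_tsum hfiber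
    _ = (1 - r)⁻¹ * ∑' U : {U // T U}, w U.1 * D.m U.1 := by
        simp only [ENNReal.tsum_prod', ENNReal.tsum_mul_right, ENNReal.tsum_geometric,
          ENNReal.tsum_mul_left]

def DominatesFromAbove (β : ι → ℝ) (ε : ℝ) (E' E : ι) : Prop :=
  D.sub E E' ∧ (2 : ℝ) ^ (((D.J E' - D.J E : ℤ) : ℝ) * ε) * β E ^ 2 < β E' ^ 2

theorem exists_undominated_ancestor (β : ι → ℝ) {ε : ℝ} (hε : 0 < ε) (hβ : ∀ F, β F ^ 2 ≤ 1)
    (E : ι) (hE : β E ≠ 0) :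
    ∃ U, (∀ E', ¬ D.DominatesFromAbove β ε E' U) ∧ D.sub E U ∧
      ∃ k : ℕ, D.J U = D.J E + k ∧ β E ^ 2 ≤ ((2 : ℝ) ^ (-ε)) ^ k * β U ^ 2 := by
  set f : ι → ℝ := fun F => β F ^ 2 * 2 ^ (-(D.J F * ε))
  obtain ⟨b, hb⟩ := exists_int_bound_of_le_two_rpow (c := f E) (by positivity) hε
  obtain ⟨U, hEU, hfU, hmax⟩ := D.exists_sub_forall_not_lt f E
    ⟨b, fun F _ hF => hb _ (hF.trans (mul_le_of_le_one_left (by positivity) (hβ F)))⟩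
  have hgap : D.J U = D.J E + (D.J U - D.J E).toNat := by
    have := D.sub_gen hEU
    omega
  refine ⟨U, fun G ⟨hUG, hlt⟩ => hmax G hUG ?_, hEU, _, hgap, ?_⟩
  · push_cast at hlt
    exact two_rpow_sub_mul_mul_lt_iff.1 hlt
  · apply le_pow_mul_of_mul_two_rpow_le
    have hgap' : (D.J U : ℝ) = D.J E + ((D.J U - D.J E).toNat : ℕ) := by exact_mod_cast hgap
    simpa only [f, hgap'] using hfU

end AbsDyadicLattice

/-- Fix `ε > 0`. Say `E′` dominates `E` from above if `E ⊆ E′` and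
`β(E′)² > (ℓ(E′)/ℓ(E))^ε β(E)²` (with `ℓ(E) = 2^{J(E)}`), and let `D_up` be the
cubes not dominated from above. Then there is `c(ε) > 0` such that
`Σ_{E ∈ D_up} β(E)² μ(E) ≥ c(ε) Σ_{E ∈ D} β(E)² μ(E)`. -/
theorem sum_over_up_dominates (ε : ℝ) (hε : 0 < ε) :
    ∃ c : ℝ≥0∞, 0 < c ∧
      ∀ (ι : Type) [Countable ι] (D : AbsDyadicLattice ι) (β : ι → ℝ),
        (∀ E, β E ∈ Set.Icc (0 : ℝ) 1) →
        c * ∑' E : ι, ENNReal.ofReal ((β E) ^ 2) * D.m E ≤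
          ∑' E : {E : ι // ∀ E', ¬ (D.sub E E' ∧
              (2 : ℝ) ^ (((D.J E' - D.J E : ℤ) : ℝ) * ε) * (β E) ^ 2 < (β E') ^ 2)},
            ENNReal.ofReal ((β E.1) ^ 2) * D.m E.1 := by
  set r := ENNReal.ofReal ((2 : ℝ) ^ (-ε))
  have hr : r < 1 := ENNReal.ofReal_lt_one.2
    (Real.rpow_lt_one_of_one_lt_of_neg one_lt_two (neg_neg_of_pos hε))
  refine ⟨1 - r, tsub_pos_of_lt hr, fun ι _ D β hβ => ?_⟩
  have hdecay (E : ι) (hE : ENNReal.ofReal (β E ^ 2) ≠ 0) :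
      ∃ U, (∀ E', ¬ D.DominatesFromAbove β ε E' U) ∧ D.sub E U ∧ ∃ k : ℕ,
        D.J U = D.J E + k ∧ ENNReal.ofReal (β E ^ 2) ≤ r ^ k * ENNReal.ofReal (β U ^ 2) := by
    obtain ⟨U, hU, hEU, k, hk, hle⟩ := D.exists_undominated_ancestor β hε
      (fun F => pow_le_one₀ (hβ F).1 (hβ F).2) E (fun h => hE (by simp [h]))
    refine ⟨U, hU, hEU, k, hk, ?_⟩
    rw [← ENNReal.ofReal_pow (by positivity), ← ENNReal.ofReal_mul (by positivity)]
    exact ENNReal.ofReal_le_ofReal hle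
  calc (1 - r) * ∑' E, ENNReal.ofReal (β E ^ 2) * D.m E
      ≤ (1 - r) * ((1 - r)⁻¹ * ∑' U : {U // ∀ E', ¬ D.DominatesFromAbove β ε E' U},
          ENNReal.ofReal (β U.1 ^ 2) * D.m U.1) := by
        gcongr
        exact D.tsum_mul_m_le_of_geometric_decay _ _ r hdecay
    _ = _ := by
        rw [← mul_assoc, ENNReal.mul_inv_cancel (tsub_pos_of_lt hr).ne' (by simp), one_mul]
        rfl
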